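/- arXiv:math/0007100 — 5 statements merged into one kernel-verified Lean document; each statement's English description precedes it below -/
import Mathlib

section
/- Let A, P ∈ ℝ^{n×n} with P symmetric positive definite and P A + Aᵀ P = −I. Let γ > 0 and let ρ satisfy 0 < ρ < 1/(2‖P‖γ), where ‖P‖ is the operator norm of P on Euclidean ℝⁿ. Then every differentiable ν : [0,∞) → ℝⁿ satisfying ν′(t) = (1/ρ) A ν(t) + w(t) for some w : [0,∞) → ℝⁿ with ‖w(t)‖ ≤ γ‖ν(t)‖ for all t ≥ 0 converges to 0 as t → ∞. -/
open Matrix Filter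

/-- asymptotic stability of the observer estimation error in scaled coordinates.
If `P` is symmetric positive definite with `P A + Aᵀ P = −I`, `γ > 0`,
`0 < ρ < 1/(2‖P‖γ)`, then every differentiable `ν : [0,∞) → ℝⁿ` with
`ν' = (1/ρ) A ν + w`, `‖w‖ ≤ γ‖ν‖`, converges to `0` as `t → ∞`. -/
theorem statement3 (n : ℕ) (A P : Matrix (Fin n) (Fin n) ℝ)
    (hPsymm : P.IsSymm) (hPpos : P.PosDef)
    (hLyap : P * A + Aᵀ * P = -1)
    (γ ρ : ℝ) (hγ : 0 < γ) (hρ0 : 0 < ρ)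
    (hρ : ρ < 1 / (2 * ‖(Matrix.toEuclideanCLM (𝕜 := ℝ) P :
        EuclideanSpace ℝ (Fin n) →L[ℝ] EuclideanSpace ℝ (Fin n))‖ * γ))
    (ν w : ℝ → EuclideanSpace ℝ (Fin n))
    (hν : ∀ t : ℝ, 0 ≤ t →
      HasDerivAt ν ((1 / ρ) • (Matrix.toEuclideanCLM (𝕜 := ℝ) A) (ν t) + w t) t)
    (hw : ∀ t : ℝ, 0 ≤ t → ‖w t‖ ≤ γ * ‖ν t‖) :
    Tendsto ν atTop (nhds 0) := by
  set Pc : EuclideanSpace ℝ (Fin n) →L[ℝ] EuclideanSpace ℝ (Fin n) := Matrix.toEuclideanCLM (𝕜 := ℝ) P with hPc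
  set Ac : EuclideanSpace ℝ (Fin n) →L[ℝ] EuclideanSpace ℝ (Fin n) := Matrix.toEuclideanCLM (𝕜 := ℝ) A with hAc
  -- ‖Pc‖ > 0
  have hPcnorm : 0 < ‖Pc‖ := by
    rcases (norm_nonneg Pc).lt_or_eq with h | h
    · exact h
    · exfalso; rw [← h] at hρ; simp at hρ; linarith
  -- Pc is self-adjoint (symmetric)
  have hstarP : star P = P := by
    have h1 : Pᴴ = Pᵀ := by
      ext i j; simp [Matrix.conjTranspose_apply, Matrix.transpose_apply]
    rw [Matrix.star_eq_conjTranspose, h1, hPsymm]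
  have hPsa : _root_.IsSelfAdjoint Pc := by
    show star Pc = Pc
    rw [hPc, ← map_star, hstarP]
  have hPsymm' : ∀ x y : EuclideanSpace ℝ (Fin n), inner ℝ (Pc x) y = (inner ℝ x (Pc y) : ℝ) :=
    ContinuousLinearMap.isSelfAdjoint_iff_isSymmetric.mp hPsa
  -- positivity of the quadratic form
  have hquadpos : ∀ x : EuclideanSpace ℝ (Fin n), x ≠ 0 → 0 < (inner ℝ x (Pc x) : ℝ) := by
    intro x hx
    rw [EuclideanSpace.inner_eq_star_dotProduct]
    have h2 : (Pc x).ofLp = P *ᵥ x.ofLp := rfl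
    rw [h2, dotProduct_comm]
    apply hPpos.dotProduct_mulVec_pos
    intro h
    apply hx
    have := congrArg (WithLp.equiv 2 (Fin n → ℝ)).symm h
    simpa using this
  -- upper bound of the quadratic form
  have hupper : ∀ x : EuclideanSpace ℝ (Fin n), (inner ℝ x (Pc x) : ℝ) ≤ ‖Pc‖ * ‖x‖ ^ 2 := by
    intro x
    have h1 : (inner ℝ x (Pc x) : ℝ) ≤ ‖x‖ * ‖Pc x‖ := real_inner_le_norm _ _
    have h2 : ‖Pc x‖ ≤ ‖Pc‖ * ‖x‖ := Pc.le_opNorm x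
    nlinarith [norm_nonneg x]
  -- lower bound: coercivity via compactness of the sphere
  have hEnontriv : Nontrivial (EuclideanSpace ℝ (Fin n)) := by
    rcases subsingleton_or_nontrivial (EuclideanSpace ℝ (Fin n)) with h | h
    · exfalso
      have : Pc = 0 := by
        apply ContinuousLinearMap.ext; intro x; exact Subsingleton.elim _ _
      rw [this, norm_zero] at hPcnorm; exact lt_irrefl _ hPcnorm
    · exact h
  obtain ⟨x₀, hx₀mem, hx₀min⟩ :=
    (isCompact_sphere (0 : EuclideanSpace ℝ (Fin n)) 1).exists_isMinOn
      (NormedSpace.sphere_nonempty.mpr zero_le_one)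
      (((continuous_id.inner (𝕜 := ℝ) Pc.continuous)).continuousOn)
  set cm : ℝ := inner ℝ x₀ (Pc x₀) with hcm
  have hx₀norm : ‖x₀‖ = 1 := by simpa using hx₀mem
  have hcmpos : 0 < cm := by
    apply hquadpos
    intro h; rw [h, norm_zero] at hx₀norm; norm_num at hx₀norm
  have hlower : ∀ x : EuclideanSpace ℝ (Fin n), cm * ‖x‖ ^ 2 ≤ (inner ℝ x (Pc x) : ℝ) := by
    intro x
    rcases eq_or_ne x 0 with rfl | hx
    · simp
    · have hxn : (0 : ℝ) < ‖x‖ := norm_pos_iff.mpr hx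
      set u : EuclideanSpace ℝ (Fin n) := ‖x‖⁻¹ • x with hu
      have hun : ‖u‖ = 1 := by
        rw [hu, norm_smul, norm_inv, norm_norm, inv_mul_cancel₀ hxn.ne']
      have h1 : cm ≤ (inner ℝ u (Pc u) : ℝ) := hx₀min (by simpa using hun)
      have h2 : (inner ℝ u (Pc u) : ℝ) = ‖x‖⁻¹ ^ 2 * inner ℝ x (Pc x) := by
        rw [hu, _root_.map_smul, real_inner_smul_left, real_inner_smul_right]
        ring
      rw [h2] at h1
      have := mul_le_mul_of_nonneg_left h1 (le_of_lt (by positivity : (0:ℝ) < ‖x‖ ^ 2))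
      calc cm * ‖x‖ ^ 2 = ‖x‖ ^ 2 * cm := by ring
        _ ≤ ‖x‖ ^ 2 * (‖x‖⁻¹ ^ 2 * inner ℝ x (Pc x)) := this
        _ = inner ℝ x (Pc x) := by field_simp
  -- key Lyapunov identity: 2⟪x, Pc (Ac x)⟫ = -‖x‖²
  have hkey : ∀ x : EuclideanSpace ℝ (Fin n), 2 * (inner ℝ x (Pc (Ac x)) : ℝ) = -‖x‖ ^ 2 := by
    intro x
    have hAT : (Matrix.toEuclideanCLM (𝕜 := ℝ) Aᵀ) = star Ac := by
      have h1 : star A = Aᵀ := by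
        rw [Matrix.star_eq_conjTranspose]
        ext i j; simp [Matrix.conjTranspose_apply, Matrix.transpose_apply]
      rw [hAc, ← map_star, h1]
    have hsum := congrArg (Matrix.toEuclideanCLM (𝕜 := ℝ)) hLyap
    rw [_root_.map_add, _root_.map_mul, _root_.map_mul, _root_.map_neg, _root_.map_one] at hsum
    have happ := congrArg (fun (T : EuclideanSpace ℝ (Fin n) →L[ℝ] EuclideanSpace ℝ (Fin n)) => (inner ℝ x (T x) : ℝ)) hsum
    simp only [ContinuousLinearMap.add_apply, ContinuousLinearMap.mul_apply,
      ContinuousLinearMap.neg_apply, ContinuousLinearMap.one_apply,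
      inner_add_right, inner_neg_right] at happ
    have hterm : (inner ℝ x ((Matrix.toEuclideanCLM (𝕜 := ℝ) Aᵀ) (Pc x)) : ℝ)
        = inner ℝ x (Pc (Ac x)) := by
      rw [hAT, ContinuousLinearMap.star_eq_adjoint,
        ContinuousLinearMap.adjoint_inner_right]
      rw [← hPsymm' x (Ac x), real_inner_comm]
    rw [← hPc, ← hAc, hterm, real_inner_self_eq_norm_sq] at happ
    linarith
  -- constants
  set K₀ : ℝ := 1 / ρ - 2 * ‖Pc‖ * γ with hK₀
  have hK₀pos : 0 < K₀ := by
    have h2 : 0 < 2 * ‖Pc‖ * γ := by positivity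
    rw [lt_div_iff₀ h2] at hρ
    have h3 : 2 * ‖Pc‖ * γ < 1 / ρ := by
      rw [lt_div_iff₀ hρ0]; linarith [mul_comm ρ (2 * ‖Pc‖ * γ)]
    rw [hK₀]
    linarith
  set K : ℝ := K₀ / ‖Pc‖ with hK
  have hKpos : 0 < K := div_pos hK₀pos hPcnorm
  -- the Lyapunov function
  set V : ℝ → ℝ := fun t => (inner ℝ (ν t) (Pc (ν t)) : ℝ) with hV
  -- derivative of V and its bound
  have hVderiv : ∀ t : ℝ, 0 ≤ t → ∃ D : ℝ, HasDerivAt V D t ∧ D ≤ -K * V t := by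
    intro t ht
    set ν' : EuclideanSpace ℝ (Fin n) := (1 / ρ) • Ac (ν t) + w t with hν'
    have hd : HasDerivAt ν ν' t := hν t ht
    have hPd : HasDerivAt (fun s => Pc (ν s)) (Pc ν') t :=
      Pc.hasFDerivAt.comp_hasDerivAt t hd
    have hVd : HasDerivAt V (inner ℝ (ν t) (Pc ν') + inner ℝ ν' (Pc (ν t)) : ℝ) t :=
      HasDerivAt.inner ℝ hd hPd
    refine ⟨_, hVd, ?_⟩
    have hsym2 : (inner ℝ ν' (Pc (ν t)) : ℝ) = inner ℝ (ν t) (Pc ν') := by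
      rw [← hPsymm' ν' (ν t), real_inner_comm]
    have hexp : (inner ℝ (ν t) (Pc ν') : ℝ)
        = (1 / ρ) * inner ℝ (ν t) (Pc (Ac (ν t))) + inner ℝ (ν t) (Pc (w t)) := by
      rw [hν', _root_.map_add, _root_.map_smul, inner_add_right, real_inner_smul_right]
    have hkey' := hkey (ν t)
    have hcross : (inner ℝ (ν t) (Pc (w t)) : ℝ) ≤ ‖Pc‖ * γ * ‖ν t‖ ^ 2 := by
      have h1 : (inner ℝ (ν t) (Pc (w t)) : ℝ) ≤ ‖ν t‖ * ‖Pc (w t)‖ :=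
        real_inner_le_norm _ _
      have h2 : ‖Pc (w t)‖ ≤ ‖Pc‖ * ‖w t‖ := Pc.le_opNorm _
      have h3 := hw t ht
      calc (inner ℝ (ν t) (Pc (w t)) : ℝ) ≤ ‖ν t‖ * ‖Pc (w t)‖ := h1
        _ ≤ ‖ν t‖ * (‖Pc‖ * ‖w t‖) :=
            mul_le_mul_of_nonneg_left h2 (norm_nonneg _)
        _ ≤ ‖ν t‖ * (‖Pc‖ * (γ * ‖ν t‖)) := by
            apply mul_le_mul_of_nonneg_left _ (norm_nonneg _)
            exact mul_le_mul_of_nonneg_left h3 (norm_nonneg _)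
        _ = ‖Pc‖ * γ * ‖ν t‖ ^ 2 := by ring
    have hVub : V t ≤ ‖Pc‖ * ‖ν t‖ ^ 2 := hupper (ν t)
    have hρinv : 0 < 1 / ρ := by positivity
    -- total derivative ≤ -K₀ ‖ν t‖² ≤ -K V t
    have hD : (inner ℝ (ν t) (Pc ν') + inner ℝ ν' (Pc (ν t)) : ℝ)
        ≤ -K₀ * ‖ν t‖ ^ 2 := by
      rw [hsym2, hexp]
      calc 1 / ρ * (inner ℝ (ν t) (Pc (Ac (ν t))) : ℝ) + inner ℝ (ν t) (Pc (w t))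
            + (1 / ρ * inner ℝ (ν t) (Pc (Ac (ν t))) + inner ℝ (ν t) (Pc (w t)))
          = (1 / ρ) * (2 * inner ℝ (ν t) (Pc (Ac (ν t)))) + 2 * inner ℝ (ν t) (Pc (w t)) := by
            ring
        _ = (1 / ρ) * (-‖ν t‖ ^ 2) + 2 * inner ℝ (ν t) (Pc (w t)) := by rw [hkey']
        _ ≤ (1 / ρ) * (-‖ν t‖ ^ 2) + 2 * (‖Pc‖ * γ * ‖ν t‖ ^ 2) := by linarith
        _ = -K₀ * ‖ν t‖ ^ 2 := by rw [hK₀]; ring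
    have hfinal : -K₀ * ‖ν t‖ ^ 2 ≤ -K * V t := by
      rw [hK]
      have h1 : V t / ‖Pc‖ ≤ ‖ν t‖ ^ 2 := by
        rw [div_le_iff₀ hPcnorm, mul_comm]; exact hVub
      have h2 : K₀ * (V t / ‖Pc‖) ≤ K₀ * ‖ν t‖ ^ 2 :=
        mul_le_mul_of_nonneg_left h1 hK₀pos.le
      have : K₀ / ‖Pc‖ * V t = K₀ * (V t / ‖Pc‖) := by ring
      linarith [this ▸ h2]
    linarith
  -- V is nonneg
  have hVnonneg : ∀ t : ℝ, 0 ≤ V t := by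
    intro t
    rcases eq_or_ne (ν t) 0 with h | h
    · simp [hV, h]
    · exact (hquadpos _ h).le
  -- decay: V t ≤ V 0 * exp (-(K * t)) for t ≥ 0
  have hdecay : ∀ t : ℝ, 0 ≤ t → V t ≤ V 0 * Real.exp (-(K * t)) := by
    intro t ht
    set F : ℝ → ℝ := fun s => V s * Real.exp (K * s) with hF
    have hFderiv : ∀ s ∈ Set.Ioi (0:ℝ), ∃ D : ℝ,
        HasDerivAt F ((D + K * V s) * Real.exp (K * s)) s ∧ D ≤ -K * V s := by
      intro s hs
      obtain ⟨D, hD, hDle⟩ := hVderiv s (le_of_lt hs)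
      refine ⟨D, ?_, hDle⟩
      have hexp : HasDerivAt (fun s => Real.exp (K * s)) (Real.exp (K * s) * K) s := by
        simpa using ((hasDerivAt_id s).const_mul K).exp
      have := hD.mul hexp
      exact this.congr_deriv (by ring)
    have hFanti : AntitoneOn F (Set.Ici (0:ℝ)) := by
      apply antitoneOn_of_deriv_nonpos (convex_Ici 0)
      · apply ContinuousOn.mul
        · intro s hs
          obtain ⟨D, hD, _⟩ := hVderiv s hs
          exact hD.continuousAt.continuousWithinAt
        · exact (Real.continuous_exp.comp (continuous_const.mul continuous_id)).continuousOn
      · intro s hs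
        rw [interior_Ici] at hs
        obtain ⟨D, hD, _⟩ := hFderiv s hs
        exact hD.differentiableAt.differentiableWithinAt
      · intro s hs
        rw [interior_Ici] at hs
        obtain ⟨D, hD, hDle⟩ := hFderiv s hs
        rw [hD.deriv]
        have h0 : D + K * V s ≤ 0 := by linarith
        exact mul_nonpos_of_nonpos_of_nonneg h0 (Real.exp_pos _).le
    have hFt : F t ≤ F 0 := hFanti (Set.self_mem_Ici) (Set.mem_Ici.mpr ht) ht
    have hF0 : F 0 = V 0 := by simp [hF]
    rw [hF0] at hFt
    have hexppos : 0 < Real.exp (K * t) := Real.exp_pos _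
    have : V t * Real.exp (K * t) ≤ V 0 := hFt
    rw [Real.exp_neg]
    rw [← le_div_iff₀ hexppos] at this
    rwa [div_eq_mul_inv] at this
  -- squeeze
  have hexp0 : Tendsto (fun t : ℝ => Real.exp (-(K * t))) atTop (nhds 0) := by
    apply Real.tendsto_exp_atBot.comp
    have h1 : Tendsto (fun t : ℝ => K * t) atTop atTop :=
      Tendsto.const_mul_atTop hKpos tendsto_id
    exact tendsto_neg_atBot_iff.mpr h1
  have hsq : Tendsto (fun t => ‖ν t‖ ^ 2) atTop (nhds 0) := by
    apply squeeze_zero' (g := fun t => (V 0 / cm) * Real.exp (-(K * t)))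
    · filter_upwards [eventually_ge_atTop (0:ℝ)] with t _
      positivity
    · filter_upwards [eventually_ge_atTop (0:ℝ)] with t ht
      have h1 : cm * ‖ν t‖ ^ 2 ≤ V t := hlower (ν t)
      have h2 := hdecay t ht
      rw [div_mul_eq_mul_div, le_div_iff₀ hcmpos]
      nlinarith
    · have h2 : Tendsto (fun t : ℝ => V 0 / cm * Real.exp (-(K * t))) atTop
          (nhds (V 0 / cm * 0)) := hexp0.const_mul _
      rwa [mul_zero] at h2
  have hnorm : Tendsto (fun t => ‖ν t‖) atTop (nhds 0) := by
    have h1 := (Real.continuous_sqrt.tendsto 0).comp hsq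
    rw [Real.sqrt_zero] at h1
    exact h1.congr fun t => Real.sqrt_sq (norm_nonneg _)
  exact tendsto_zero_iff_norm_tendsto_zero.mpr hnorm
end

section
/- Let M ≥ m > 0, g ≥ 0, R > 0 be constants, let n ≥ 1 be an integer, and let ε > 0 and T > 0. Then there exists ρ* ∈ (0,1] such that for every ρ ∈ (0, ρ*] and every t ≥ T: √(M/m) · ρ^{−(n−1)} · R · exp(−(1/(2M))·(1/ρ − g)·t) ≤ ε. -/
open Filter Real

/-- auxiliary limit: `x^k * exp(-c*x) → 0` as `x → ∞` for `c > 0`. -/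
lemma aux_tendsto (k : ℕ) {c : ℝ} (hc : 0 < c) :
    Tendsto (fun x : ℝ => x ^ k * Real.exp (-(c * x))) atTop (nhds 0) := by
  have h := (tendsto_pow_mul_exp_neg_atTop_nhds_zero k).comp
      (tendsto_id.const_mul_atTop hc)
  have h2 : Tendsto (fun x : ℝ => (c * x) ^ k * Real.exp (-(c * x))) atTop (nhds 0) := h
  have h3 := h2.const_mul (c ^ k)⁻¹
  rw [mul_zero] at h3
  refine h3.congr' ?_
  filter_upwards [eventually_ge_atTop (0:ℝ)] with x _
  rw [mul_pow]
  field_simp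

/-- arbitrarily fast convergence of the high-gain observer despite peaking.
For any `ε > 0` and `T > 0` there exists `ρ* ∈ (0,1]` such that for all `ρ ∈ (0,ρ*]` and
all `t ≥ T`: `√(M/m)·ρ^{−(n−1)}·R·exp(−(1/(2M))(1/ρ − g)t) ≤ ε`. -/
theorem statement7 (m M g R : ℝ) (hm : 0 < m) (hmM : m ≤ M) (hg : 0 ≤ g) (hR : 0 < R)
    (n : ℕ) (hn : 1 ≤ n) (ε T : ℝ) (hε : 0 < ε) (hT : 0 < T) :
    ∃ ρstar : ℝ, 0 < ρstar ∧ ρstar ≤ 1 ∧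
      ∀ ρ : ℝ, 0 < ρ → ρ ≤ ρstar → ∀ t : ℝ, T ≤ t →
        Real.sqrt (M / m) * (1 / ρ ^ (n - 1)) * R *
            Real.exp (-(1 / (2 * M)) * (1 / ρ - g) * t) ≤ ε := by
  have hM : 0 < M := lt_of_lt_of_le hm hmM
  set c : ℝ := T / (2 * M) with hcdef
  have hc0 : 0 < c := div_pos hT (by linarith)
  set K : ℝ := Real.sqrt (M / m) * R * Real.exp (c * g) with hKdef
  have hsq : 0 < Real.sqrt (M / m) := Real.sqrt_pos.mpr (div_pos hM hm)
  have hK0 : 0 < K := by positivity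
  -- the function (ρ⁻¹)^(n-1) * exp(-c * ρ⁻¹) tends to 0 as ρ → 0⁺
  have htend : Tendsto (fun ρ : ℝ => (ρ⁻¹) ^ (n - 1) * Real.exp (-(c * ρ⁻¹)))
      (nhdsWithin 0 (Set.Ioi 0)) (nhds 0) :=
    (aux_tendsto (n - 1) hc0).comp tendsto_inv_nhdsGT_zero
  have hεK : 0 < ε / K := div_pos hε hK0
  obtain ⟨δ, hδ0, hδ⟩ := Metric.tendsto_nhdsWithin_nhds.mp htend (ε / K) hεK
  refine ⟨min (min (δ / 2) 1) (1 / (g + 1)), ?_, ?_, ?_⟩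
  · have : 0 < 1 / (g + 1) := by positivity
    have : 0 < δ / 2 := by positivity
    simp only [lt_min_iff]
    constructor
    · exact ⟨by positivity, one_pos⟩
    · positivity
  · exact le_trans (min_le_left _ _) (min_le_right _ _)
  · intro ρ hρ0 hρle t ht
    have hρδ : ρ < δ := lt_of_le_of_lt
      (le_trans hρle (le_trans (min_le_left _ _) (min_le_left _ _))) (by linarith)
    have hρg : 1 / ρ - g ≥ 0 := by
      have h1 : ρ ≤ 1 / (g + 1) := le_trans hρle (min_le_right _ _)
      have hg1 : 0 < g + 1 := by linarith
      have : g + 1 ≤ 1 / ρ := by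
        rw [le_div_iff₀ hρ0]
        calc (g + 1) * ρ ≤ (g + 1) * (1 / (g + 1)) := by
              exact mul_le_mul_of_nonneg_left h1 (le_of_lt hg1)
          _ = 1 := by field_simp
      linarith
    -- bound in t: worst case t = T
    have hmono : Real.exp (-(1 / (2 * M)) * (1 / ρ - g) * t)
        ≤ Real.exp (-(1 / (2 * M)) * (1 / ρ - g) * T) := by
      apply Real.exp_le_exp.mpr
      have h2M : 0 < 1 / (2 * M) := by positivity
      nlinarith [mul_le_mul_of_nonneg_left ht (mul_nonneg (le_of_lt h2M) hρg)]
    have hmul : 0 ≤ Real.sqrt (M / m) * (1 / ρ ^ (n - 1)) * R := by positivity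
    have hstep : Real.sqrt (M / m) * (1 / ρ ^ (n - 1)) * R *
        Real.exp (-(1 / (2 * M)) * (1 / ρ - g) * t)
        ≤ Real.sqrt (M / m) * (1 / ρ ^ (n - 1)) * R *
          Real.exp (-(1 / (2 * M)) * (1 / ρ - g) * T) :=
      mul_le_mul_of_nonneg_left hmono hmul
    -- rewrite the T-expression as K * h ρ
    have hexp : Real.exp (-(1 / (2 * M)) * (1 / ρ - g) * T)
        = Real.exp (c * g) * Real.exp (-(c * ρ⁻¹)) := by
      rw [← Real.exp_add]
      congr 1
      field_simp [hcdef]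
      have hMc : M * c * 2 = T := by rw [hcdef]; field_simp
      linear_combination (1 - ρ * g) * hMc
    have heq : Real.sqrt (M / m) * (1 / ρ ^ (n - 1)) * R *
        Real.exp (-(1 / (2 * M)) * (1 / ρ - g) * T)
        = K * ((ρ⁻¹) ^ (n - 1) * Real.exp (-(c * ρ⁻¹))) := by
      rw [hexp, hKdef, one_div, ← inv_pow]
      ring
    have hh : (ρ⁻¹) ^ (n - 1) * Real.exp (-(c * ρ⁻¹)) < ε / K := by
      have hmem : ρ ∈ Set.Ioi (0:ℝ) := hρ0
      have hdist : dist ρ 0 < δ := by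
        rw [Real.dist_eq, sub_zero, abs_of_pos hρ0]; exact hρδ
      have := hδ hmem hdist
      rw [Real.dist_eq, sub_zero] at this
      calc (ρ⁻¹) ^ (n - 1) * Real.exp (-(c * ρ⁻¹))
          ≤ |(ρ⁻¹) ^ (n - 1) * Real.exp (-(c * ρ⁻¹))| := le_abs_self _
        _ < ε / K := this
    calc Real.sqrt (M / m) * (1 / ρ ^ (n - 1)) * R *
          Real.exp (-(1 / (2 * M)) * (1 / ρ - g) * t)
        ≤ Real.sqrt (M / m) * (1 / ρ ^ (n - 1)) * R *
          Real.exp (-(1 / (2 * M)) * (1 / ρ - g) * T) := hstep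
      _ = K * ((ρ⁻¹) ^ (n - 1) * Real.exp (-(c * ρ⁻¹))) := heq
      _ ≤ K * (ε / K) := mul_le_mul_of_nonneg_left (le_of_lt hh) (le_of_lt hK0)
      _ = ε := by field_simp
end

section
/- Let C ⊆ ℝⁿ be a convex set and b : ℝⁿ → ℝ with b(x) ≤ 0 for all x ∈ C. Let ζ̂ ∈ C with b(ζ̂) = 0, b differentiable at ζ̂, and N = ∇b(ζ̂). Then for every ζ ∈ C, every p ≥ 0, and all vectors v, u ∈ ℝⁿ: ⟨ζ̂ − ζ, (v − p·N) − u⟩ ≤ ⟨ζ̂ − ζ, v − u⟩. In particular, if ζ̂(t) and ζ(t) are differentiable curves with ζ̂(t₀) = ζ̂, ζ(t₀) = ζ, then the derivative at t₀ of ‖ζ̂(t) − ζ(t)‖² computed with the projected velocity v − pN for ζ̂ is no larger than that computed with the unprojected velocity v. -/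
open RealInnerProductSpace

/-- projection does not slow down convergence. With `C` convex, `b ≤ 0` on `C`,
`b(ζ̂) = 0`, and `N = ∇b(ζ̂)`: for every `ζ ∈ C`, `p ≥ 0`, and vectors `v, u`,
`⟨ζ̂ − ζ, (v − p·N) − u⟩ ≤ ⟨ζ̂ − ζ, v − u⟩`; in particular, for differentiable curves through
`ζ̂` and `ζ` with these velocities, the derivative of `‖ζ̂(t) − ζ(t)‖²` computed with the
projected velocity `v − p·N` is no larger than that computed with the unprojected one. -/
theorem statement10 (n : ℕ) (C : Set (EuclideanSpace ℝ (Fin n))) (hC : Convex ℝ C)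
    (b : EuclideanSpace ℝ (Fin n) → ℝ) (hb : ∀ x ∈ C, b x ≤ 0)
    (ζhat : EuclideanSpace ℝ (Fin n)) (hmem : ζhat ∈ C) (hbd : b ζhat = 0)
    (N : EuclideanSpace ℝ (Fin n)) (hgrad : HasGradientAt b N ζhat) :
    (∀ ζ ∈ C, ∀ p : ℝ, 0 ≤ p → ∀ v u : EuclideanSpace ℝ (Fin n),
      ⟪ζhat - ζ, (v - p • N) - u⟫ ≤ ⟪ζhat - ζ, v - u⟫) ∧
    (∀ ζ ∈ C, ∀ p : ℝ, 0 ≤ p → ∀ v u : EuclideanSpace ℝ (Fin n),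
      ∀ chat c : ℝ → EuclideanSpace ℝ (Fin n), ∀ t₀ : ℝ,
        chat t₀ = ζhat → c t₀ = ζ →
        HasDerivAt chat (v - p • N) t₀ → HasDerivAt c u t₀ →
        HasDerivAt (fun t => ‖chat t - c t‖ ^ 2)
          (2 * ⟪ζhat - ζ, (v - p • N) - u⟫) t₀ ∧
        2 * ⟪ζhat - ζ, (v - p • N) - u⟫ ≤ 2 * ⟪ζhat - ζ, v - u⟫) := by
  -- Key fact: ⟪ζhat - ζ, N⟫ ≥ 0 for ζ ∈ C.
  have hkey : ∀ ζ ∈ C, 0 ≤ ⟪ζhat - ζ, N⟫ := by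
    intro ζ hζ
    have hmax : IsLocalMaxOn b C ζhat := by
      exact eventually_mem_nhdsWithin.mono fun x hx => by simpa [hbd] using hb x hx
    have htan : ζ - ζhat ∈ posTangentConeAt C ζhat :=
      sub_mem_posTangentConeAt_of_segment_subset (hC.segment_subset hmem hζ)
    have hfd : HasFDerivWithinAt b (InnerProductSpace.toDual ℝ _ N) C ζhat :=
      hgrad.hasFDerivAt.hasFDerivWithinAt
    have := hmax.hasFDerivWithinAt_nonpos hfd htan
    have h2 : ⟪N, ζ - ζhat⟫ ≤ 0 := this
    have : ⟪N, ζhat - ζ⟫ = -⟪N, ζ - ζhat⟫ := by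
      rw [← inner_neg_right]; congr 1; abel
    rw [real_inner_comm, this]
    linarith
  have hineq : ∀ ζ ∈ C, ∀ p : ℝ, 0 ≤ p → ∀ v u : EuclideanSpace ℝ (Fin n),
      ⟪ζhat - ζ, (v - p • N) - u⟫ ≤ ⟪ζhat - ζ, v - u⟫ := by
    intro ζ hζ p hp v u
    have h1 : ((v - p • N) - u) = (v - u) - p • N := by abel
    rw [h1, inner_sub_right, inner_smul_right]
    have := mul_nonneg hp (hkey ζ hζ)
    linarith
  refine ⟨hineq, ?_⟩
  intro ζ hζ p hp v u chat c t₀ hchat hc hdchat hdc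
  constructor
  · have hdiff : HasDerivAt (fun t => chat t - c t) ((v - p • N) - u) t₀ := hdchat.sub hdc
    have hinner : HasDerivAt (fun t => ⟪chat t - c t, chat t - c t⟫)
        (⟪chat t₀ - c t₀, (v - p • N) - u⟫ + ⟪(v - p • N) - u, chat t₀ - c t₀⟫) t₀ :=
      hdiff.inner ℝ hdiff
    have heq : (⟪chat t₀ - c t₀, (v - p • N) - u⟫ + ⟪(v - p • N) - u, chat t₀ - c t₀⟫)
        = 2 * ⟪ζhat - ζ, (v - p • N) - u⟫ := by
      rw [hchat, hc, real_inner_comm ((v - p • N) - u)]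
      ring
    rw [heq] at hinner
    convert hinner using 2 with t
    rw [← real_inner_self_eq_norm_sq]
  · have := hineq ζ hζ p hp v u
    linarith
end

section
/- Let I ⊆ ℝ be an open interval, let V, W : I → ℝ be differentiable, let x̃ : I → ℝⁿ, let α : I → ℝ with α(t) ≥ 0, and let A, γ̄, c̄₂, c̄₃ > 0 be constants such that for all t ∈ I: 0 < W(t) ≤ c̄₂‖x̃(t)‖², V′(t) ≤ −α(t) + A·γ̄·‖x̃(t)‖, and W′(t) ≤ −c̄₃‖x̃(t)‖². Then for every λ > 0, the function V_c := V + λ·√W is differentiable on I and satisfies V_c′(t) ≤ −α(t) − (c̄₃·λ/(2√c̄₂) − A·γ̄)·‖x̃(t)‖ for all t ∈ I. In particular, if λ > 2√c̄₂·A·γ̄/c̄₃, then V_c′(t) ≤ −α(t) − δ‖x̃(t)‖ for some δ > 0. -/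
/-!
By the chain rule `(√W)' = W' / (2√W)`, and `W ≤ c₂‖x̃‖²` gives `√W ≤ √c₂ ‖x̃‖`, so
`W' ≤ -c₃‖x̃‖²` yields `(√W)' ≤ -(c₃ / (2√c₂)) ‖x̃‖`. Taking the square root turns the
quadratic decay of the observer error into a linear one, which for `λ` large enough dominates
the perturbation `A γ̄ ‖x̃‖` in the derivative of `V`.
-/

theorem sqrt_le_sqrt_mul_of_le_mul_sq {w c r : ℝ} (hr : 0 ≤ r) (h : w ≤ c * r ^ 2) :
    √w ≤ √c * r := by
  calc √w ≤ √(c * r ^ 2) := Real.sqrt_le_sqrt h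
    _ = √c * r := by rw [Real.sqrt_mul' c (sq_nonneg r), Real.sqrt_sq hr]

theorem div_two_sqrt_le_of_le_neg_mul_sq {w w' c k r : ℝ} (hw : 0 < w) (hub : w ≤ c * r ^ 2)
    (hr : 0 ≤ r) (hk : 0 ≤ k) (hw' : w' ≤ -k * r ^ 2) :
    w' / (2 * √w) ≤ -(k / (2 * √c)) * r := by
  have hsqrt : √w ≤ √c * r := sqrt_le_sqrt_mul_of_le_mul_sq hr hub
  have hsqrt_pos : 0 < √w := Real.sqrt_pos.mpr hw
  have hcr_pos : 0 < √c * r := hsqrt_pos.trans_le hsqrt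
  calc w' / (2 * √w) ≤ -(k * r ^ 2) / (2 * √w) := by
        gcongr
        linarith
    _ ≤ -(k * r ^ 2) / (2 * (√c * r)) := by
        rw [neg_div, neg_div, neg_le_neg_iff]
        gcongr
    _ = -(k / (2 * √c)) * r := by
        have hc : 0 < √c := pos_of_mul_pos_left hcr_pos hr
        field_simp

theorem statement13_general (n : ℕ) (I : Set ℝ)
    (V W : ℝ → ℝ) (xt : ℝ → EuclideanSpace ℝ (Fin n)) (α : ℝ → ℝ)
    (A γbar c₂ c₃ : ℝ) (hc₂ : 0 < c₂) (hc₃ : 0 < c₃)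
    (hVdiff : ∀ t ∈ I, DifferentiableAt ℝ V t)
    (hWdiff : ∀ t ∈ I, DifferentiableAt ℝ W t)
    (hWpos : ∀ t ∈ I, 0 < W t)
    (hWub : ∀ t ∈ I, W t ≤ c₂ * ‖xt t‖ ^ 2)
    (hV' : ∀ t ∈ I, deriv V t ≤ -α t + A * γbar * ‖xt t‖)
    (hW' : ∀ t ∈ I, deriv W t ≤ -c₃ * ‖xt t‖ ^ 2) :
    ∀ lam : ℝ, 0 < lam →
      ((∀ t ∈ I, DifferentiableAt ℝ (fun s => V s + lam * Real.sqrt (W s)) t ∧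
          deriv (fun s => V s + lam * Real.sqrt (W s)) t ≤
            -α t - (c₃ * lam / (2 * Real.sqrt c₂) - A * γbar) * ‖xt t‖) ∧
        (2 * Real.sqrt c₂ * A * γbar / c₃ < lam →
          ∃ δ : ℝ, 0 < δ ∧ ∀ t ∈ I,
            deriv (fun s => V s + lam * Real.sqrt (W s)) t ≤ -α t - δ * ‖xt t‖)) := by
  intro lam hlam
  have key : ∀ t ∈ I, DifferentiableAt ℝ (fun s => V s + lam * √(W s)) t ∧
      deriv (fun s => V s + lam * √(W s)) t ≤
        -α t - (c₃ * lam / (2 * √c₂) - A * γbar) * ‖xt t‖ := by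
    intro t ht
    have hderiv : HasDerivAt (fun s => V s + lam * √(W s))
        (deriv V t + lam * (deriv W t / (2 * √(W t)))) t :=
      (hVdiff t ht).hasDerivAt.add
        (((hWdiff t ht).hasDerivAt.sqrt (hWpos t ht).ne').const_mul lam)
    have hsqrtW := div_two_sqrt_le_of_le_neg_mul_sq (hWpos t ht) (hWub t ht)
      (norm_nonneg (xt t)) hc₃.le (hW' t ht)
    refine ⟨hderiv.differentiableAt, ?_⟩
    rw [hderiv.deriv]
    calc deriv V t + lam * (deriv W t / (2 * √(W t)))
        ≤ (-α t + A * γbar * ‖xt t‖) + lam * (-(c₃ / (2 * √c₂)) * ‖xt t‖) :=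
          add_le_add (hV' t ht) (mul_le_mul_of_nonneg_left hsqrtW hlam.le)
      _ = -α t - (c₃ * lam / (2 * √c₂) - A * γbar) * ‖xt t‖ := by ring
  refine ⟨key, fun hlam_large => ⟨c₃ * lam / (2 * √c₂) - A * γbar, ?_, fun t ht => (key t ht).2⟩⟩
  have hc₂_sqrt : 0 < √c₂ := Real.sqrt_pos.mpr hc₂
  rw [sub_pos, lt_div_iff₀ (by positivity)]
  rw [div_lt_iff₀ hc₃] at hlam_large
  linarith

/-- composite Lyapunov function computation. On an open interval `I`, if
`0 < W ≤ c̄₂‖xt‖²`, `V' ≤ −α + A·γ̄·‖xt‖`, and `W' ≤ −c̄₃‖xt‖²`, then for every `λ > 0`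
the function `V_c = V + λ√W` is differentiable on `I` with
`V_c' ≤ −α − (c̄₃λ/(2√c̄₂) − A·γ̄)‖xt‖`; in particular if `λ > 2√c̄₂·A·γ̄/c̄₃` then
`V_c' ≤ −α − δ‖xt‖` for some `δ > 0`. -/
theorem statement13 (n : ℕ) (I : Set ℝ) (hIopen : IsOpen I) (hIconn : I.OrdConnected)
    (V W : ℝ → ℝ) (xt : ℝ → EuclideanSpace ℝ (Fin n)) (α : ℝ → ℝ)
    (A γbar c₂ c₃ : ℝ) (hA : 0 < A) (hγ : 0 < γbar) (hc₂ : 0 < c₂) (hc₃ : 0 < c₃)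
    (hVdiff : ∀ t ∈ I, DifferentiableAt ℝ V t)
    (hWdiff : ∀ t ∈ I, DifferentiableAt ℝ W t)
    (hα : ∀ t ∈ I, 0 ≤ α t)
    (hWpos : ∀ t ∈ I, 0 < W t)
    (hWub : ∀ t ∈ I, W t ≤ c₂ * ‖xt t‖ ^ 2)
    (hV' : ∀ t ∈ I, deriv V t ≤ -α t + A * γbar * ‖xt t‖)
    (hW' : ∀ t ∈ I, deriv W t ≤ -c₃ * ‖xt t‖ ^ 2) :
    ∀ lam : ℝ, 0 < lam →
      ((∀ t ∈ I, DifferentiableAt ℝ (fun s => V s + lam * Real.sqrt (W s)) t ∧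
          deriv (fun s => V s + lam * Real.sqrt (W s)) t ≤
            -α t - (c₃ * lam / (2 * Real.sqrt c₂) - A * γbar) * ‖xt t‖) ∧
        (2 * Real.sqrt c₂ * A * γbar / c₃ < lam →
          ∃ δ : ℝ, 0 < δ ∧ ∀ t ∈ I,
            deriv (fun s => V s + lam * Real.sqrt (W s)) t ≤ -α t - δ * ‖xt t‖)) :=
  statement13_general n I V W xt α A γbar c₂ c₃ hc₂ hc₃ hVdiff hWdiff hWpos hWub hV' hW'
end

section
/- Let x₁, x₂, z₁ : [0,∞) → ℝ be differentiable functions satisfying, for all t ≥ 0: x₁′ = x₂, x₂′ = (1 + x₁)exp(x₁²) + z₁ − 1, and z₁′ = −x₂·exp(x₁²)·(2x₁² + 2x₁ + 1) − ( x₁ + 3x₂ + 3·((1 + x₁)exp(x₁²) + z₁ − 1) ). Then x₁(t) → 0, x₂(t) → 0, and z₁(t) → 0 as t → ∞. -/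
/-!
In the coordinates `x₃ = (1 + x₁) exp (x₁²) + z₁ - 1` the closed loop is the linear chain
`x₁' = x₂, x₂' = x₃, x₃' = -(x₁ + 3 x₂ + 3 x₃)`, whose characteristic polynomial is `(s + 1)³`.
Integrating with the factor `eᵗ` three times gives `eᵗ (x₁ + 2x₂ + x₃) = a`,
`eᵗ (x₁ + x₂) = b + a t` and `eᵗ x₁ = c + b t + a t²/2`, so every coordinate is a polynomial
times `e⁻ᵗ` and tends to `0`; then `z₁ = x₃ - ((1 + x₁) exp (x₁²) - 1) → 0` as well.
-/

open Filter Topology Polynomial Real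

theorem eq_of_hasDerivAt_eq_of_nonneg {f g f' : ℝ → ℝ}
    (hf : ∀ t, 0 ≤ t → HasDerivAt f (f' t) t) (hg : ∀ t, 0 ≤ t → HasDerivAt g (f' t) t)
    (h0 : f 0 = g 0) {t : ℝ} (ht : 0 ≤ t) : f t = g t :=
  eq_of_has_deriv_right_eq (fun s hs => (hf s hs.1).hasDerivWithinAt)
    (fun s hs => (hg s hs.1).hasDerivWithinAt)
    (fun s hs => (hf s hs.1).continuousAt.continuousWithinAt)
    (fun s hs => (hg s hs.1).continuousAt.continuousWithinAt) h0 t ⟨ht, le_rfl⟩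

theorem exp_mul_eq_of_hasDerivAt {f f' P : ℝ → ℝ} (hf : ∀ t, 0 ≤ t → HasDerivAt f (f' t) t)
    (hP : ∀ t, 0 ≤ t → HasDerivAt P (exp t * (f t + f' t)) t) (h0 : P 0 = f 0)
    {t : ℝ} (ht : 0 ≤ t) : exp t * f t = P t :=
  eq_of_hasDerivAt_eq_of_nonneg
    (fun s hs => ((hasDerivAt_exp s).mul (hf s hs)).congr_deriv (by ring)) hP
    (by simp [h0]) ht

theorem tendsto_zero_of_exp_mul_eventuallyEq_eval {f : ℝ → ℝ} (p : ℝ[X])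
    (h : ∀ᶠ t in atTop, exp t * f t = p.eval t) : Tendsto f atTop (𝓝 0) :=
  p.tendsto_div_exp_atTop.congr' <| h.mono fun t ht => by
    rw [← ht, mul_div_cancel_left₀ _ (exp_ne_zero t)]

theorem tendsto_zero_of_hasDerivAt_triple_pole {x₁ x₂ x₃ : ℝ → ℝ}
    (h₁ : ∀ t, 0 ≤ t → HasDerivAt x₁ (x₂ t) t) (h₂ : ∀ t, 0 ≤ t → HasDerivAt x₂ (x₃ t) t)
    (h₃ : ∀ t, 0 ≤ t → HasDerivAt x₃ (-(x₁ t + 3 * x₂ t + 3 * x₃ t)) t) :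
    Tendsto x₁ atTop (𝓝 0) ∧ Tendsto x₂ atTop (𝓝 0) ∧ Tendsto x₃ atTop (𝓝 0) := by
  set a := x₁ 0 + 2 * x₂ 0 + x₃ 0
  set b := x₁ 0 + x₂ 0
  set c := x₁ 0
  have hw : ∀ t, 0 ≤ t → exp t * (x₁ t + 2 * x₂ t + x₃ t) = a := fun t ht =>
    exp_mul_eq_of_hasDerivAt (f := fun s => x₁ s + 2 * x₂ s + x₃ s)
      (fun s hs => ((h₁ s hs).add ((h₂ s hs).const_mul 2)).add (h₃ s hs))
      (fun s _ => (hasDerivAt_const s a).congr_deriv (by ring)) rfl ht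
  have hv : ∀ t, 0 ≤ t → exp t * (x₁ t + x₂ t) = b + a * t := fun t ht =>
    exp_mul_eq_of_hasDerivAt (f := fun s => x₁ s + x₂ s) (fun s hs => (h₁ s hs).add (h₂ s hs))
      (fun s hs => (((hasDerivAt_id s).const_mul a).const_add b).congr_deriv <| by
        rw [← hw s hs]; ring)
      (by simp [a, b]) ht
  have hx : ∀ t, 0 ≤ t → exp t * x₁ t = c + b * t + a / 2 * t ^ 2 := fun t ht =>
    exp_mul_eq_of_hasDerivAt h₁
      (fun s hs => ((((hasDerivAt_id s).const_mul b).const_add c).add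
        (((hasDerivAt_id s).pow 2).const_mul (a / 2))).congr_deriv <| by
          rw [hv s hs]; norm_num; ring)
      (by simp [c]) ht
  have lim_x₁ : Tendsto x₁ atTop (𝓝 0) :=
    tendsto_zero_of_exp_mul_eventuallyEq_eval (C c + C b * X + C (a / 2) * X ^ 2) <|
      (eventually_ge_atTop 0).mono fun t ht => by simp [hx t ht]
  have lim_v : Tendsto (fun t => x₁ t + x₂ t) atTop (𝓝 0) :=
    tendsto_zero_of_exp_mul_eventuallyEq_eval (C b + C a * X) <|
      (eventually_ge_atTop 0).mono fun t ht => by simp [hv t ht]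
  have lim_w : Tendsto (fun t => x₁ t + 2 * x₂ t + x₃ t) atTop (𝓝 0) :=
    tendsto_zero_of_exp_mul_eventuallyEq_eval (C a) <|
      (eventually_ge_atTop 0).mono fun t ht => by simp [hw t ht]
  have lim_x₂ : Tendsto x₂ atTop (𝓝 0) := by
    simpa using (lim_v.sub lim_x₁).congr fun t => by ring
  refine ⟨lim_x₁, lim_x₂, ?_⟩
  simpa using ((lim_w.sub lim_x₁).sub (lim_x₂.const_mul 2)).congr fun t => by ring

theorem hasDerivAt_linearizing_coord {x₁ z₁ : ℝ → ℝ} {t d dz : ℝ} (hx₁ : HasDerivAt x₁ d t)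
    (hz₁ : HasDerivAt z₁ dz t) :
    HasDerivAt (fun s => (1 + x₁ s) * exp (x₁ s ^ 2) + z₁ s - 1)
      (d * exp (x₁ t ^ 2) * (2 * x₁ t ^ 2 + 2 * x₁ t + 1) + dz) t :=
  ((((hx₁.const_add 1).mul (hx₁.fun_pow 2).exp).add hz₁).sub_const 1).congr_deriv (by ring)

/-- the example's extended system in closed loop with the linearizing state
feedback. If `x₁' = x₂`, `x₂' = (1+x₁)exp(x₁²) + z₁ − 1`, and
`z₁' = −x₂·exp(x₁²)·(2x₁² + 2x₁ + 1) − (x₁ + 3x₂ + 3((1+x₁)exp(x₁²) + z₁ − 1))` on `[0,∞)`,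
then `x₁, x₂, z₁ → 0` as `t → ∞`. -/
theorem statement19 (x₁ x₂ z₁ : ℝ → ℝ)
    (h₁ : ∀ t : ℝ, 0 ≤ t → HasDerivAt x₁ (x₂ t) t)
    (h₂ : ∀ t : ℝ, 0 ≤ t →
      HasDerivAt x₂ ((1 + x₁ t) * Real.exp ((x₁ t) ^ 2) + z₁ t - 1) t)
    (h₃ : ∀ t : ℝ, 0 ≤ t →
      HasDerivAt z₁
        (-(x₂ t) * Real.exp ((x₁ t) ^ 2) * (2 * (x₁ t) ^ 2 + 2 * (x₁ t) + 1) -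
          (x₁ t + 3 * x₂ t + 3 * ((1 + x₁ t) * Real.exp ((x₁ t) ^ 2) + z₁ t - 1))) t) :
    Tendsto x₁ atTop (nhds 0) ∧ Tendsto x₂ atTop (nhds 0) ∧ Tendsto z₁ atTop (nhds 0) := by
  obtain ⟨lim_x₁, lim_x₂, lim_x₃⟩ := tendsto_zero_of_hasDerivAt_triple_pole h₁ h₂
    fun t ht => (hasDerivAt_linearizing_coord (h₁ t ht) (h₃ t ht)).congr_deriv (by ring)
  have lim_nonlinear : Tendsto (fun t => (1 + x₁ t) * exp (x₁ t ^ 2) - 1) atTop (𝓝 0) := by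
    simpa using
      (((tendsto_const_nhds (x := (1 : ℝ))).add lim_x₁).mul (lim_x₁.pow 2).rexp).sub_const 1
  exact ⟨lim_x₁, lim_x₂, by simpa using (lim_x₃.sub lim_nonlinear).congr fun t => by ring⟩
end
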